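/- Coverage by processed vertices: for every 0 ≤ k ≤ n and every pair of vertices s, t with d_G(s,t) < ∞, if there exists an index i ≤ k with v_i ∈ P_G(s, t) (i.e., some shortest path between s and t passes through one of the first k vertices), then Query(s, t, L'_k) = d_G(s, t). -/

import Mathlib

open SimpleGraph

/-- The 2-hop query value computed from a label assignment `L`:
the minimum of `d₁ + d₂` over common label vertices, `∞` if none. -/
noncomputable def Query {V : Type*} (L : V → Set (V × ℕ∞)) (s t : V) : ℕ∞ :=
  sInf {x : ℕ∞ | ∃ w d₁ d₂, (w, d₁) ∈ L s ∧ (w, d₂) ∈ L t ∧ x = d₁ + d₂}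

/- The naive landmark labels `L_k`. -/
open Classical in
noncomputable def naiveL {V : Type*} (G : SimpleGraph V) (ord : ℕ → V) :
    ℕ → V → Set (V × ℕ∞)
  | 0 => fun _ => ∅
  | (k + 1) => fun u =>
      if G.edist (ord (k + 1)) u < ⊤ then
        naiveL G ord k u ∪ {(ord (k + 1), G.edist (ord (k + 1)) u)}
      else naiveL G ord k u

/- The pruned landmark labels `L'_k`. -/
open Classical in
noncomputable def prunedL {V : Type*} (G : SimpleGraph V) (ord : ℕ → V) :
    ℕ → V → Set (V × ℕ∞)
  | 0 => fun _ => ∅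
  | (k + 1) => fun u =>
      if G.edist (ord (k + 1)) u < ⊤ ∧
          G.edist (ord (k + 1)) u < Query (prunedL G ord k) (ord (k + 1)) u then
        prunedL G ord k u ∪ {(ord (k + 1), G.edist (ord (k + 1)) u)}
      else prunedL G ord k u

/-- `P_G(s,t)`: the set of vertices on shortest paths between `s` and `t`. -/
def PG {V : Type*} (G : SimpleGraph V) (s t : V) : Set V :=
  {w | G.edist s w + G.edist w t = G.edist s t}
lemma mem_prunedL {V : Type*} (G : SimpleGraph V) (ord : ℕ → V) :
    ∀ k u p, p ∈ prunedL G ord k u →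
      ∃ j, 1 ≤ j ∧ j ≤ k ∧ p = (ord j, G.edist (ord j) u) ∧ G.edist (ord j) u < ⊤ := by
  intro k
  induction k with
  | zero => intro u p hp; simp [prunedL] at hp
  | succ k ih =>
    intro u p hp
    simp only [prunedL] at hp
    split_ifs at hp with h
    · rcases hp with hp | hp
      · obtain ⟨j, h1, h2, h3, h4⟩ := ih u p hp
        exact ⟨j, h1, h2.trans (Nat.le_succ k), h3, h4⟩
      · exact ⟨k+1, Nat.succ_le_succ (Nat.zero_le k), le_refl _, by simpa using hp, h.1⟩
    · obtain ⟨j, h1, h2, h3, h4⟩ := ih u p hp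
      exact ⟨j, h1, h2.trans (Nat.le_succ k), h3, h4⟩

lemma prunedL_mono {V : Type*} (G : SimpleGraph V) (ord : ℕ → V) {k k' : ℕ}
    (h : k ≤ k') (u : V) : prunedL G ord k u ⊆ prunedL G ord k' u := by
  induction h with
  | refl => exact subset_rfl
  | step _ ih =>
    refine ih.trans fun p hp => ?_
    simp only [prunedL]
    split_ifs
    · exact Set.mem_union_left _ hp
    · exact hp

lemma edist_le_query {V : Type*} (G : SimpleGraph V) (ord : ℕ → V) (k : ℕ) (s t : V) :
    G.edist s t ≤ Query (prunedL G ord k) s t := by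
  apply le_sInf
  rintro x ⟨w, d₁, d₂, h1, h2, rfl⟩
  obtain ⟨j, -, -, hp, -⟩ := mem_prunedL G ord k s _ h1
  obtain ⟨j', -, -, hp', -⟩ := mem_prunedL G ord k t _ h2
  obtain ⟨hw, hd₁⟩ := Prod.mk.injEq .. ▸ hp
  obtain ⟨hw', hd₂⟩ := Prod.mk.injEq .. ▸ hp'
  subst hw hd₁ hd₂
  calc G.edist s t ≤ G.edist s (ord j) + G.edist (ord j) t := G.edist_triangle
    _ = G.edist (ord j) s + G.edist (ord j') t := by rw [G.edist_comm (u := s), ← hw']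

/-- the key lemma : if `i` is minimal with `ord i ∈ PG G s t`, the landmark is not pruned at `s`. -/
lemma mem_label {V : Type*} (G : SimpleGraph V) (ord : ℕ → V) {i : ℕ} {s t : V}
    (hi : 1 ≤ i) (hPG : ord i ∈ PG G s t) (hfin : G.edist s t < ⊤)
    (hmin : ∀ j, 1 ≤ j → j < i → ord j ∉ PG G s t) :
    (ord i, G.edist (ord i) s) ∈ prunedL G ord i s := by
  obtain ⟨m, rfl⟩ := Nat.exists_eq_add_of_le hi
  rw [Nat.add_comm] at *
  have hPG' : G.edist s (ord (m+1)) + G.edist (ord (m+1)) t = G.edist s t := hPG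
  have hfs : G.edist (ord (m+1)) s < ⊤ := by
    rw [G.edist_comm]
    exact lt_of_le_of_lt (le_trans le_self_add hPG'.le) hfin
  have hcond : G.edist (ord (m+1)) s < ⊤ ∧
      G.edist (ord (m+1)) s < Query (prunedL G ord m) (ord (m+1)) s := by
    refine ⟨hfs, ?_⟩
    by_contra hq
    push_neg at hq
    -- extract a witness from the sInf
    have h1 : Query (prunedL G ord m) (ord (m+1)) s < G.edist (ord (m+1)) s + 1 :=
      lt_of_le_of_lt hq ((ENat.lt_add_one_iff hfs.ne).mpr le_rfl)
    obtain ⟨x, hx, hxlt⟩ := sInf_lt_iff.mp h1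
    obtain ⟨w, d₁, d₂, hw1, hw2, rfl⟩ := hx
    have hxle : d₁ + d₂ ≤ G.edist (ord (m+1)) s := (ENat.lt_add_one_iff hfs.ne).mp hxlt
    obtain ⟨j, hj1, hj2, hp, -⟩ := mem_prunedL G ord m _ _ hw1
    obtain ⟨j', -, -, hp', -⟩ := mem_prunedL G ord m _ _ hw2
    obtain ⟨hw, hd₁⟩ := Prod.mk.injEq .. ▸ hp
    obtain ⟨hw', hd₂⟩ := Prod.mk.injEq .. ▸ hp'
    subst hw hd₁ hd₂
    rw [← hw'] at hxle
    refine hmin j hj1 (Nat.lt_succ_of_le hj2) ?_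
    have hle : G.edist s (ord j) + G.edist (ord j) t ≤ G.edist s t := by
      calc G.edist s (ord j) + G.edist (ord j) t
          ≤ G.edist s (ord j) + (G.edist (ord j) (ord (m+1)) + G.edist (ord (m+1)) t) :=
            add_le_add le_rfl G.edist_triangle
        _ = (G.edist (ord j) (ord (m+1)) + G.edist (ord j) s) + G.edist (ord (m+1)) t := by
            rw [G.edist_comm (u := s) (v := ord j)]; ring
        _ ≤ G.edist (ord (m+1)) s + G.edist (ord (m+1)) t := add_le_add hxle le_rfl
        _ = G.edist s t := by rw [← hPG', G.edist_comm (u := ord (m+1)) (v := s)]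
    exact le_antisymm hle G.edist_triangle
  show _ ∈ prunedL G ord (m+1) s
  simp only [prunedL, if_pos hcond]
  exact Set.mem_union_right _ rfl

lemma PG_symm {V : Type*} (G : SimpleGraph V) {s t w : V} (h : w ∈ PG G s t) :
    w ∈ PG G t s := by
  simp only [PG, Set.mem_setOf_eq] at *
  rw [G.edist_comm (u := t) (v := w), G.edist_comm (u := w) (v := s),
    G.edist_comm (u := t) (v := s), add_comm]
  exact h

/-- Coverage by processed vertices: for `0 ≤ k ≤ n` and vertices `s, t` with
`d_G(s,t) < ∞`, if some shortest path between `s` and `t` passes through one of the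
first `k` vertices, then `Query(s, t, L'_k) = d_G(s, t)`. -/
theorem query_prunedL_eq_of_covered {V : Type*} [Fintype V] (G : SimpleGraph V)
    (n : ℕ) (ord : ℕ → V)
    (hinj : ∀ i ∈ Finset.Icc 1 n, ∀ j ∈ Finset.Icc 1 n, ord i = ord j → i = j)
    (hsurj : ∀ u : V, ∃ i ∈ Finset.Icc 1 n, ord i = u)
    (k : ℕ) (hk : k ≤ n) (s t : V) (hfin : G.edist s t < ⊤)
    (hcov : ∃ i, 1 ≤ i ∧ i ≤ k ∧ ord i ∈ PG G s t) :
    Query (prunedL G ord k) s t = G.edist s t := by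
  classical
  obtain ⟨i, hi1, hik, hiPG⟩ := hcov
  have hex : ∃ j, 1 ≤ j ∧ ord j ∈ PG G s t := ⟨i, hi1, hiPG⟩
  set i₀ := Nat.find hex with hi₀def
  obtain ⟨hi₀1, hPG₀⟩ : 1 ≤ i₀ ∧ ord i₀ ∈ PG G s t := Nat.find_spec hex
  have hi₀k : i₀ ≤ k := le_trans (Nat.find_min' hex ⟨hi1, hiPG⟩) hik
  have hmin : ∀ j, 1 ≤ j → j < i₀ → ord j ∉ PG G s t := fun j h1 hlt hmem =>
    Nat.find_min hex hlt ⟨h1, hmem⟩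
  have hs := mem_label G ord hi₀1 hPG₀ hfin hmin
  have hfin' : G.edist t s < ⊤ := by
    rw [G.edist_comm (u := t) (v := s)]; exact hfin
  have hmin' : ∀ j, 1 ≤ j → j < i₀ → ord j ∉ PG G t s := fun j h1 hlt hmem =>
    hmin j h1 hlt (PG_symm G hmem)
  have ht := mem_label G ord hi₀1 (PG_symm G hPG₀) hfin' hmin'
  have hsum : G.edist (ord i₀) s + G.edist (ord i₀) t = G.edist s t := by
    rw [G.edist_comm (u := ord i₀) (v := s)]; exact hPG₀
  refine le_antisymm ?_ (edist_le_query G ord k s t)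
  calc Query (prunedL G ord k) s t
      ≤ G.edist (ord i₀) s + G.edist (ord i₀) t :=
        sInf_le ⟨ord i₀, _, _, prunedL_mono G ord hi₀k s hs,
          prunedL_mono G ord hi₀k t ht, rfl⟩
    _ = G.edist s t := hsum
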